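/- Let M be a measure space with finite measure μ₀, and let (Σ_k) for k ∈ ℕ be an increasing sequence of measurable sets with Σ_0 = ∅ and union Σ. Suppose for each t < T the measure μ_t satisfies μ_t(Σ_k \ Σ_{k-1}) ≤ 2 (T - t)^(1/k) μ₀(Σ_k \ Σ_{k-1}) for all k ≥ 1. Then lim_{t → T⁻} μ_t(Σ) = 0. -/

import Mathlib

/-!
Split `⋃ k, S k` into the disjoint layers `S k \ S (k - 1)`. Once `T - t ≤ 1`, the `μ t`-mass of
every layer is at most twice its `μ₀`-mass, a summable bound since `μ₀` is finite, and the bound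
for each single layer tends to `0` as `t → T⁻` because its exponent `1 / k` is positive. Dominated
convergence for series of `ℝ≥0∞` then gives the claim.
-/

open Filter MeasureTheory Topology ENNReal

theorem ENNReal.tendsto_tsum_of_dominated_convergence {α β : Type*} [Countable β]
    {l : Filter α} [l.IsCountablyGenerated] {f : α → β → ℝ≥0∞} {g bound : β → ℝ≥0∞}
    (h_fin : ∑' k, bound k ≠ ∞) (h_bound : ∀ᶠ t in l, ∀ k, f t k ≤ bound k)
    (h_lim : ∀ k, Tendsto (f · k) l (𝓝 (g k))) :
    Tendsto (fun t => ∑' k, f t k) l (𝓝 (∑' k, g k)) := by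
  let _ : MeasurableSpace β := ⊤
  simp only [← lintegral_count]
  exact tendsto_lintegral_filter_of_dominated_convergence' bound
    (.of_forall fun _ => measurable_from_top.aemeasurable)
    (h_bound.mono fun _ h => .of_forall h) (by rwa [lintegral_count])
    (.of_forall h_lim)

theorem disjointed_eq_sdiff_pred {α : Type*} [GeneralizedBooleanAlgebra α] {S : ℕ → α}
    (hS : Monotone S) (h0 : S 0 = ⊥) (k : ℕ) : disjointed S k = S k \ S (k - 1) := by
  cases k with
  | zero => simp [h0]
  | succ k => exact hS.disjointed_succ (not_isMax k)

theorem tendsto_const_sub_rpow_nhds_zero (T : ℝ) {p : ℝ} (hp : 0 < p) :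
    Tendsto (fun t : ℝ => (T - t) ^ p) (𝓝 T) (𝓝 0) := by
  have h : Continuous fun t : ℝ => (T - t) ^ p :=
    (continuous_const.sub continuous_id).rpow_const fun _ => Or.inr hp.le
  simpa [Real.zero_rpow hp.ne'] using h.tendsto T

theorem tendsto_tsum_ofReal_mul_rpow_sub_nhdsLT (T : ℝ) {c : ℝ} (hc : 0 ≤ c) {a : ℕ → ℝ≥0∞}
    (ha : ∑' k, a k ≠ ∞) (ha0 : a 0 = 0) :
    Tendsto (fun t => ∑' k : ℕ, ENNReal.ofReal (c * (T - t) ^ ((1 : ℝ) / k)) * a k)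
      (𝓝[<] T) (𝓝 0) := by
  have h_bound : ∀ᶠ t in 𝓝[<] T, ∀ k : ℕ,
      ENNReal.ofReal (c * (T - t) ^ ((1 : ℝ) / k)) * a k ≤ ENNReal.ofReal c * a k := by
    filter_upwards [Ioo_mem_nhdsLT (sub_one_lt T)] with t ⟨ht₁, ht₂⟩ k
    have hpow : (T - t) ^ ((1 : ℝ) / k) ≤ 1 :=
      Real.rpow_le_one (by linarith) (by linarith) (by positivity)
    gcongr
    exact mul_le_of_le_one_right hc hpow
  have h_lim (k : ℕ) : Tendsto (fun t => ENNReal.ofReal (c * (T - t) ^ ((1 : ℝ) / k)) * a k)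
      (𝓝[<] T) (𝓝 0) := by
    rcases Nat.eq_zero_or_pos k with rfl | hk
    · -- the exponent is `1 / 0 = 0` here, so only `a 0 = 0` makes this term vanish
      simp [ha0]
    have hpow := tendsto_const_sub_rpow_nhds_zero T (one_div_pos.2 (Nat.cast_pos.2 hk))
    have h := ENNReal.Tendsto.mul_const (ENNReal.tendsto_ofReal (hpow.const_mul c))
      (Or.inr (ENNReal.ne_top_of_tsum_ne_top ha k))
    simpa using h.mono_left nhdsWithin_le_nhds
  simpa using ENNReal.tendsto_tsum_of_dominated_convergence
    (ENNReal.tsum_mul_left ▸ ENNReal.mul_ne_top ENNReal.ofReal_ne_top ha) h_bound h_lim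

/-- If `μ₀` is finite, `S k` is an increasing sequence of measurable sets with `S 0 = ∅`,
and for all `t ∈ [0,T)` and `k ≥ 1` one has
`μ t (S k \ S (k-1)) ≤ 2 (T-t)^(1/k) μ₀ (S k \ S (k-1))`, then `μ t (⋃ k, S k) → 0`
as `t → T⁻`. -/
theorem singular_set_vanishing_measure {X : Type*} [MeasurableSpace X]
    (T : ℝ) (hT : 0 < T) (μ₀ : Measure X) [IsFiniteMeasure μ₀]
    (μ : ℝ → Measure X) (S : ℕ → Set X)
    (hmeas : ∀ k, MeasurableSet (S k)) (h0 : S 0 = ∅) (hmono : Monotone S)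
    (hineq : ∀ t ∈ Set.Ico (0 : ℝ) T, ∀ k : ℕ, 1 ≤ k →
      μ t (S k \ S (k - 1)) ≤
        ENNReal.ofReal (2 * (T - t) ^ ((1 : ℝ) / k)) * μ₀ (S k \ S (k - 1))) :
    Tendsto (fun t => μ t (⋃ k, S k)) (nhdsWithin T (Set.Iio T)) (nhds 0) := by
  have hpiece : ∀ t ∈ Set.Ico (0 : ℝ) T, ∀ k : ℕ,
      μ t (disjointed S k) ≤
        ENNReal.ofReal (2 * (T - t) ^ ((1 : ℝ) / k)) * μ₀ (disjointed S k) := by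
    intro t ht k
    rcases Nat.eq_zero_or_pos k with rfl | hk
    · simp [h0]
    · rw [disjointed_eq_sdiff_pred hmono h0]
      exact hineq t ht k hk
  have hcover : ∀ᶠ t in 𝓝[<] T, μ t (⋃ k, S k) ≤
      ∑' k : ℕ, ENNReal.ofReal (2 * (T - t) ^ ((1 : ℝ) / k)) * μ₀ (disjointed S k) := by
    filter_upwards [Ico_mem_nhdsLT hT] with t ht
    rw [← iUnion_disjointed]
    exact (measure_iUnion_le _).trans (ENNReal.tsum_le_tsum (hpiece t ht))
  have hfin : ∑' k, μ₀ (disjointed S k) ≠ ∞ := by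
    rw [← measure_iUnion (disjoint_disjointed S) (.disjointed hmeas)]
    exact measure_ne_top _ _
  exact tendsto_of_tendsto_of_tendsto_of_le_of_le' tendsto_const_nhds
    (tendsto_tsum_ofReal_mul_rpow_sub_nhdsLT T zero_le_two hfin (by simp [h0]))
    (.of_forall fun _ => zero_le) hcover
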